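/- arXiv:1002.3944 — 3 statements merged into one kernel-verified Lean document; each statement's English description precedes it below -/
import Mathlib

section
/- Let (A,[-,-],α) be a Hom-algebra with anti-symmetric bracket and multiplicative α. Then the Hom-Maltsev identity J(α(x),α(y),[x,z]) = [J(x,y,z),α²(x)] for all x,y,z holds if and only if α([[x,y],[x,z]]) = [[[x,y],α(z)],α²(x)] + [[[y,z],α(x)],α²(x)] + [[[z,x],α(x)],α²(y)] holds for all x,y,z. -/
variable {K A : Type*} [Field K] [CharZero K] [AddCommGroup A] [Module K A]

/-- Hom-Jacobian of a bracket with twisting map α. -/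
def homJac (br : A →ₗ[K] A →ₗ[K] A) (α : A →ₗ[K] A) (x y z : A) : A :=
  br (br x y) (α z) + br (br z x) (α y) + br (br y z) (α x)

theorem stmt0 (br : A →ₗ[K] A →ₗ[K] A) (α : A →ₗ[K] A)
    (hmult : ∀ x y : A, α (br x y) = br (α x) (α y))
    (hanti : ∀ x y : A, br x y = - br y x) :
    (∀ x y z : A,
        homJac br α (α x) (α y) (br x z) = br (homJac br α x y z) (α (α x)))
    ↔
    (∀ x y z : A,
        α (br (br x y) (br x z)) =
          br (br (br x y) (α z)) (α (α x)) + br (br (br y z) (α x)) (α (α x))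
            + br (br (br z x) (α x)) (α (α y))) := by
  have key : ∀ x y z : A,
      homJac br α (α x) (α y) (br x z) - br (homJac br α x y z) (α (α x)) =
        α (br (br x y) (br x z)) -
          (br (br (br x y) (α z)) (α (α x)) + br (br (br y z) (α x)) (α (α x))
            + br (br (br z x) (α x)) (α (α y))) := by
    intro x y z
    have e1 : br (br (α x) (α y)) (α (br x z)) = α (br (br x y) (br x z)) := by
      rw [hmult (br x y) (br x z), hmult x y]
    have e2 : br (br (α y) (br x z)) (α (α x)) =
        br (br (br z x) (α y)) (α (α x)) := by
      simp only [hanti x z, hanti (α y) (br z x), map_neg, LinearMap.neg_apply,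
        neg_neg]
    have e3 : br (br (br x z) (α x)) (α (α y)) =
        - br (br (br z x) (α x)) (α (α y)) := by
      simp only [hanti x z, map_neg, LinearMap.neg_apply]
    simp only [homJac, map_add, LinearMap.add_apply, e1, e2, e3]
    abel
  constructor
  · intro h x y z
    have h1 := key x y z
    rw [sub_eq_zero.mpr (h x y z)] at h1
    exact sub_eq_zero.mp h1.symm
  · intro h x y z
    have h1 := key x y z
    rw [sub_eq_zero.mpr (h x y z)] at h1
    exact sub_eq_zero.mp h1
end

section
/- Let (A,[-,-],α) be a Hom-Maltsev algebra. Then for each n ≥ 0, the n-th derived Hom-algebra Aⁿ = (A, [-,-]⁽ⁿ⁾ = α^{2ⁿ−1}∘[-,-], α^{2ⁿ}) is also a Hom-Maltsev algebra. -/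
variable {K A : Type*} [Field K] [CharZero K] [AddCommGroup A] [Module K A]

/-- Predicate: (br, α) is a (multiplicative) Hom-Maltsev structure. -/
def IsHM (br : A →ₗ[K] A →ₗ[K] A) (α : A →ₗ[K] A) : Prop :=
  (∀ x y : A, α (br x y) = br (α x) (α y)) ∧
  (∀ x y : A, br x y = - br y x) ∧
  (∀ x y z : A,
    homJac br α (α x) (α y) (br x z) = br (homJac br α x y z) (α (α x)))

lemma homJac_mult (br : A →ₗ[K] A →ₗ[K] A) (α : A →ₗ[K] A)
    (hmult : ∀ x y : A, α (br x y) = br (α x) (α y)) (x y z : A) :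
    α (homJac br α x y z) = homJac br α (α x) (α y) (α z) := by
  simp [homJac, hmult]

lemma homJac_step (br : A →ₗ[K] A →ₗ[K] A) (α : A →ₗ[K] A)
    (hmult : ∀ x y : A, α (br x y) = br (α x) (α y)) (x y z : A) :
    homJac (br.compr₂ α) (α ^ 2) x y z = α (α (homJac br α x y z)) := by
  simp [homJac, hmult, pow_two, Module.End.mul_apply]

lemma step (br : A →ₗ[K] A →ₗ[K] A) (α : A →ₗ[K] A) (h : IsHM br α) :
    IsHM (br.compr₂ α) (α ^ 2) := by
  obtain ⟨hmult, hanti, hmaltsev⟩ := h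
  refine ⟨?_, ?_, ?_⟩
  · intro x y
    simp [pow_two, Module.End.mul_apply, hmult]
  · intro x y
    simp only [LinearMap.compr₂_apply]
    rw [hanti, map_neg]
  · intro x y z
    simp only [LinearMap.compr₂_apply]
    rw [homJac_step br α hmult, homJac_step br α hmult]
    simp only [pow_two, Module.End.mul_apply]
    rw [hmult x z, hmaltsev (α x) (α y) (α z), ← homJac_mult br α hmult, ← hmult]
    simp [hmult]

theorem stmt2 (br : A →ₗ[K] A →ₗ[K] A) (α : A →ₗ[K] A)
    (hmult : ∀ x y : A, α (br x y) = br (α x) (α y))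
    (hanti : ∀ x y : A, br x y = - br y x)
    (hmaltsev : ∀ x y z : A,
      homJac br α (α x) (α y) (br x z) = br (homJac br α x y z) (α (α x)))
    (n : ℕ) :
    (∀ x y : A, (α ^ (2 ^ n)) ((br.compr₂ (α ^ (2 ^ n - 1))) x y) =
        (br.compr₂ (α ^ (2 ^ n - 1))) ((α ^ (2 ^ n)) x) ((α ^ (2 ^ n)) y)) ∧
    (∀ x y : A, (br.compr₂ (α ^ (2 ^ n - 1))) x y = - (br.compr₂ (α ^ (2 ^ n - 1))) y x) ∧
    (∀ x y z : A,
      homJac (br.compr₂ (α ^ (2 ^ n - 1))) (α ^ (2 ^ n))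
          ((α ^ (2 ^ n)) x) ((α ^ (2 ^ n)) y) ((br.compr₂ (α ^ (2 ^ n - 1))) x z)
        = (br.compr₂ (α ^ (2 ^ n - 1)))
            (homJac (br.compr₂ (α ^ (2 ^ n - 1))) (α ^ (2 ^ n)) x y z)
            ((α ^ (2 ^ n)) ((α ^ (2 ^ n)) x))) := by
  suffices h : IsHM (br.compr₂ (α ^ (2 ^ n - 1))) (α ^ (2 ^ n)) from h
  induction n with
  | zero =>
    have e : br.compr₂ (α ^ (2 ^ 0 - 1)) = br := by
      ext x y; simp
    rw [e]
    exact ⟨hmult, hanti, hmaltsev⟩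
  | succ n ih =>
    have e1 : br.compr₂ (α ^ (2 ^ (n+1) - 1)) =
        (br.compr₂ (α ^ (2 ^ n - 1))).compr₂ (α ^ (2 ^ n)) := by
      have key : 2 ^ n + (2 ^ n - 1) = 2 ^ (n + 1) - 1 := by
        have h1 : 1 ≤ 2 ^ n := Nat.one_le_two_pow
        have h2 : 2 ^ (n + 1) = 2 ^ n + 2 ^ n := by ring
        omega
      ext x y
      simp only [LinearMap.compr₂_apply, Module.End.mul_apply]
      rw [key.symm, pow_add, Module.End.mul_apply]
    have e2 : α ^ (2 ^ (n+1)) = (α ^ (2 ^ n)) ^ 2 := by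
      rw [pow_succ, pow_mul]
    rw [e1, e2]
    exact step _ _ ih
end

section
/- Let (A,[-,-]) be a Maltsev algebra and α: A → A an algebra morphism. Then A_α = (A, [-,-]_α = α∘[-,-], α) is a Hom-Maltsev algebra. -/
variable {K A : Type*} [Field K] [CharZero K] [AddCommGroup A] [Module K A]

theorem stmt3 (br : A →ₗ[K] A →ₗ[K] A)
    (hanti : ∀ x y : A, br x y = - br y x)
    (hmaltsev : ∀ x y z : A,
      homJac br (LinearMap.id : A →ₗ[K] A) x y (br x z) =
        br (homJac br (LinearMap.id : A →ₗ[K] A) x y z) x)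
    (α : A →ₗ[K] A)
    (hmorph : ∀ x y : A, α (br x y) = br (α x) (α y)) :
    (∀ x y : A, (br.compr₂ α) x y = - (br.compr₂ α) y x) ∧
    (∀ x y : A, α ((br.compr₂ α) x y) = (br.compr₂ α) (α x) (α y)) ∧
    (∀ x y z : A,
      homJac (br.compr₂ α) α (α x) (α y) ((br.compr₂ α) x z) =
        (br.compr₂ α) (homJac (br.compr₂ α) α x y z) (α (α x))) := by
  have hbr' : ∀ x y : A, (br.compr₂ α) x y = α (br x y) := fun x y => rfl
  have hJα : ∀ x y z : A,
      α (homJac br (LinearMap.id : A →ₗ[K] A) x y z) =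
        homJac br (LinearMap.id : A →ₗ[K] A) (α x) (α y) (α z) := by
    intro x y z
    simp [homJac, hmorph]
  have hJ' : ∀ x y z : A,
      homJac (br.compr₂ α) α x y z =
        α (α (homJac br (LinearMap.id : A →ₗ[K] A) x y z)) := by
    intro x y z
    simp [homJac, hbr', hmorph]
  refine ⟨fun x y => ?_, fun x y => ?_, fun x y z => ?_⟩
  · simp [hbr', hanti x y]
  · simp [hbr', hmorph]
  · rw [hJ', hbr', hJ', ← hJα x y (br x z), hmaltsev, hmorph, hmorph, hbr']
end
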